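/- arXiv:1704.06314 — 4 statements merged into one kernel-verified Lean document; each statement's English description precedes it below -/
import Mathlib

section
/- For every γ > 0 there is n₀ ∈ ℕ such that for all n ≥ n₀ and all reals ε with 2^{−(2α−1)n/2} ≤ ε ≤ 1/6: if f is drawn from the distribution D_yes, then the probability that f is a k-junta (with k = ⌊αn⌋) is at least 1 − γ. -/
open Finset

/-- `f : {0,1}^n → {0,1}` is a `k`-junta: there is a set `S ⊆ [n]` with `|S| ≤ k`
such that `f x = f y` whenever `x` and `y` agree on all coordinates in `S`. -/
def IsJunta (n k : ℕ) (f : (Fin n → Bool) → Bool) : Prop :=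
  ∃ S : Finset (Fin n), S.card ≤ k ∧
    ∀ x y : Fin n → Bool, (∀ i ∈ S, x i = y i) → f x = f y

/-- `f` is `ε`-far from every `k`-junta. -/
def FarFromJuntas (n k : ℕ) (ε : ℝ) (f : (Fin n → Bool) → Bool) : Prop :=
  ∀ g : (Fin n → Bool) → Bool, IsJunta n k g →
    ε * 2 ^ n ≤ ((Finset.univ.filter (fun x => f x ≠ g x)).card : ℝ)

/-- Probability of obtaining exactly the subset `A` when each element of `U` is included
independently with probability `ρ` (and elements outside `U` are never included). -/
noncomputable def pSet {ι : Type*} [DecidableEq ι] (U : Finset ι) (ρ : ℝ) (A : Finset ι) : ℝ :=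
  if A ⊆ U then ρ ^ A.card * (1 - ρ) ^ (U.card - A.card) else 0

/-- Zero out the coordinates outside `M`.  Two strings have the same `padTo M` iff they
agree on all coordinates of `M`, so `padTo M x` serves as the index `Γ_M(x)`:
it identifies the restriction `x|_M`. -/
def padTo {n : ℕ} (M : Finset (Fin n)) (x : Fin n → Bool) : Fin n → Bool :=
  fun j => if j ∈ M then x j else false

/-- The function `f = f_{M,S,H}` built from the addressing set `M`, the family of subsets
`S_i ⊆ A` and the family of random functions `h_i(x) = z_i(x|_{S_i})`: on input `x`, the
index `i = Γ_M(x)` (represented by `padTo M x`) selects `S_i` and `z_i`, and the value is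
`z_i` evaluated at the restriction of `x` to `S_i` (represented by `padTo (S i) x`). -/
def buildF {n : ℕ} (M : Finset (Fin n)) (S : (Fin n → Bool) → Finset (Fin n))
    (z : (Fin n → Bool) → (Fin n → Bool) → Bool) : (Fin n → Bool) → Bool :=
  fun x => z (padTo M x) (padTo (S (padTo M x)) x)

open Classical in
/-- The probability, for fixed `M` and `A`, that the random function `f` obtained by
sampling each `S_i ⊆ A` (elements included independently with probability `ρ`) and
each `h_i` a uniformly random function of the coordinates in `S_i`, satisfies `E f`. -/
noncomputable def prSH (n : ℕ) (M A : Finset (Fin n)) (ρ : ℝ)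
    (E : ((Fin n → Bool) → Bool) → Prop) : ℝ :=
  ∑ S : (Fin n → Bool) → Finset (Fin n),
    ∑ z : (Fin n → Bool) → (Fin n → Bool) → Bool,
      (if E (buildF M S z) then 1 else 0) * (∏ y : Fin n → Bool, pSet A ρ (S y)) /
        (Fintype.card ((Fin n → Bool) → (Fin n → Bool) → Bool) : ℝ)

/-- The probability that a random function `f` drawn from the distribution `D` (with
`M` a uniformly random subset of `[n]` of size `t`, `A ⊆ [n]∖M` with each element
included independently with probability `ρA`, each `S_i ⊆ A` with rate `ρS`, and each
`h_i` a uniformly random function of the coordinates in `S_i`) satisfies `E f`.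
Taking `ρA = 1/2` gives `D_yes`; taking `ρA = 1/2 + (log₂ n)/√n` gives `D_no`. -/
noncomputable def prD (n t : ℕ) (ρA ρS : ℝ)
    (E : ((Fin n → Bool) → Bool) → Prop) : ℝ :=
  (∑ M ∈ Finset.univ.filter (fun M : Finset (Fin n) => M.card = t),
    ∑ A : Finset (Fin n), pSet Mᶜ ρA A * prSH n M A ρS E) / (n.choose t : ℝ)

/-!
Once `M` and `A` are fixed, every `f` in the support is a junta on `M ∪ A`, whatever the `S_i`
and `h_i` are; so `f` is a `k`-junta as soon as `|A| ≤ k - t`. Here `|A| ~ Bin(m, 1/2)` has mean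
`m/2 ≈ δn + δ√n log₂ n / 2`, while `k - t ≈ δn + δ√n log₂ n`, so the exponential Markov
inequality with `λ = 1 + log₂ n / (8√n)` bounds the failure probability by
`exp (1 - δ (log₂ n)² / 32)`, which tends to `0`.
-/

open Real Filter

section SubsetDistribution

variable {ι : Type*} [DecidableEq ι]

lemma pSet_nonneg (U : Finset ι) {ρ : ℝ} (hρ0 : 0 ≤ ρ) (hρ1 : ρ ≤ 1) (A : Finset ι) :
    0 ≤ pSet U ρ A := by
  unfold pSet
  split_ifs
  · exact mul_nonneg (pow_nonneg hρ0 _) (pow_nonneg (by linarith) _)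
  · exact le_rfl

variable [Fintype ι]

lemma sum_pSet_mul_pow (U : Finset ι) (ρ lam : ℝ) :
    ∑ A : Finset ι, pSet U ρ A * lam ^ A.card = (ρ * lam + (1 - ρ)) ^ U.card := by
  rw [← Finset.sum_subset (Finset.subset_univ U.powerset) fun A _ hA => by
    simp [pSet, Finset.mem_powerset.not.mp hA]]
  rw [← Finset.prod_const, Finset.prod_add]
  refine Finset.sum_congr rfl fun A hA => ?_
  rw [Finset.mem_powerset] at hA
  simp only [pSet, if_pos hA, Finset.prod_const, Finset.card_sdiff_of_subset hA, mul_pow]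
  ring

lemma sum_pSet (U : Finset ι) (ρ : ℝ) : ∑ A : Finset ι, pSet U ρ A = 1 := by
  simpa using sum_pSet_mul_pow U ρ 1

lemma sum_pSet_card_gt_le (U : Finset ι) {ρ lam : ℝ} (hρ0 : 0 ≤ ρ) (hρ1 : ρ ≤ 1)
    (hlam : 1 ≤ lam) (s : ℕ) :
    ∑ A with s < A.card, pSet U ρ A ≤ (ρ * lam + (1 - ρ)) ^ U.card / lam ^ s := by
  rw [← sum_pSet_mul_pow, le_div_iff₀ (by positivity), Finset.sum_mul]
  calc ∑ A with s < A.card, pSet U ρ A * lam ^ s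
      ≤ ∑ A with s < A.card, pSet U ρ A * lam ^ A.card :=
        Finset.sum_le_sum fun A hA => mul_le_mul_of_nonneg_left
          (pow_le_pow_right₀ hlam (Finset.mem_filter.mp hA).2.le) (pSet_nonneg U hρ0 hρ1 A)
    _ ≤ ∑ A, pSet U ρ A * lam ^ A.card :=
        Finset.sum_le_sum_of_subset_of_nonneg (Finset.filter_subset _ _) fun A _ _ =>
          mul_nonneg (pSet_nonneg U hρ0 hρ1 A) (by positivity)

lemma one_sub_le_sum_pSet_card_le (U : Finset ι) {ρ lam : ℝ} (hρ0 : 0 ≤ ρ) (hρ1 : ρ ≤ 1)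
    (hlam : 1 ≤ lam) (s : ℕ) :
    1 - (ρ * lam + (1 - ρ)) ^ U.card / lam ^ s ≤ ∑ A with A.card ≤ s, pSet U ρ A := by
  have hsplit := Finset.sum_filter_add_sum_filter_not Finset.univ (fun A : Finset ι => A.card ≤ s)
    (pSet U ρ)
  simp only [not_le, sum_pSet] at hsplit
  linarith [sum_pSet_card_gt_le U hρ0 hρ1 hlam s]

end SubsetDistribution

section RandomFunction

variable {n : ℕ}

lemma prSH_nonneg (M A : Finset (Fin n)) {ρ : ℝ} (hρ0 : 0 ≤ ρ) (hρ1 : ρ ≤ 1)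
    (E : ((Fin n → Bool) → Bool) → Prop) : 0 ≤ prSH n M A ρ E := by
  unfold prSH
  refine Finset.sum_nonneg fun S _ => Finset.sum_nonneg fun z _ => div_nonneg
    (mul_nonneg ?_ (Finset.prod_nonneg fun y _ => pSet_nonneg A hρ0 hρ1 _)) (Nat.cast_nonneg _)
  split_ifs <;> norm_num

lemma prSH_eq_one (M A : Finset (Fin n)) (ρ : ℝ) {E : ((Fin n → Bool) → Bool) → Prop}
    (hE : ∀ S z, (∀ y, S y ⊆ A) → E (buildF M S z)) :
    prSH n M A ρ E = 1 := by
  classical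
  have hcard : (Fintype.card ((Fin n → Bool) → (Fin n → Bool) → Bool) : ℝ) ≠ 0 :=
    Nat.cast_ne_zero.mpr Fintype.card_ne_zero
  -- only families with every `S y ⊆ A` carry weight, and for those `E` always holds
  have hS : ∀ S : (Fin n → Bool) → Finset (Fin n),
      ∑ z : (Fin n → Bool) → (Fin n → Bool) → Bool,
        (if E (buildF M S z) then (1 : ℝ) else 0) * (∏ y, pSet A ρ (S y)) /
          (Fintype.card ((Fin n → Bool) → (Fin n → Bool) → Bool) : ℝ)
      = ∏ y, pSet A ρ (S y) := by
    intro S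
    by_cases hSA : ∀ y, S y ⊆ A
    · simp only [if_pos (hE S _ hSA), one_mul, Finset.sum_const, Finset.card_univ, nsmul_eq_mul]
      field_simp
    · obtain ⟨y, hy⟩ := not_forall.mp hSA
      have hzero : ∏ y, pSet A ρ (S y) = 0 :=
        Finset.prod_eq_zero (Finset.mem_univ y) (by simp [pSet, hy])
      simp [hzero]
  unfold prSH
  rw [Finset.sum_congr rfl fun S _ => hS S, ← Fintype.prod_sum fun _ T => pSet A ρ T]
  simp [sum_pSet]

lemma isJunta_buildF (M A : Finset (Fin n)) {S : (Fin n → Bool) → Finset (Fin n)}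
    (z : (Fin n → Bool) → (Fin n → Bool) → Bool) (hS : ∀ y, S y ⊆ A) {k : ℕ}
    (hk : (M ∪ A).card ≤ k) : IsJunta n k (buildF M S z) := by
  refine ⟨M ∪ A, hk, fun x y hxy => ?_⟩
  have hpad : ∀ B ⊆ M ∪ A, padTo B x = padTo B y := fun B hB => funext fun j => by
    unfold padTo
    split_ifs with hj
    exacts [hxy j (hB hj), rfl]
  unfold buildF
  rw [hpad M Finset.subset_union_left,
    hpad _ ((hS _).trans Finset.subset_union_right)]

lemma prSH_isJunta_eq_one {M A : Finset (Fin n)} {k : ℕ} (hA : A ⊆ Mᶜ)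
    (hk : M.card + A.card ≤ k) (ρ : ℝ) : prSH n M A ρ (IsJunta n k) = 1 := by
  have hdisj : Disjoint M A := Finset.disjoint_left.mpr fun _ hiM hiA =>
    Finset.mem_compl.mp (hA hiA) hiM
  exact prSH_eq_one M A ρ fun S z hS =>
    isJunta_buildF M A z hS ((Finset.card_union_of_disjoint hdisj).trans_le hk)

lemma one_sub_le_sum_pSet_mul_prSH_isJunta {k : ℕ} (M : Finset (Fin n)) (hMk : M.card ≤ k)
    {ρA ρS lam : ℝ} (hρA0 : 0 ≤ ρA) (hρA1 : ρA ≤ 1) (hρS0 : 0 ≤ ρS) (hρS1 : ρS ≤ 1)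
    (hlam : 1 ≤ lam) :
    1 - (ρA * lam + (1 - ρA)) ^ Mᶜ.card / lam ^ (k - M.card) ≤
      ∑ A, pSet Mᶜ ρA A * prSH n M A ρS (IsJunta n k) := by
  have hsmall : ∀ A : Finset (Fin n), A.card ≤ k - M.card →
      pSet Mᶜ ρA A = pSet Mᶜ ρA A * prSH n M A ρS (IsJunta n k) := fun A hA => by
    by_cases hAM : A ⊆ Mᶜ
    · rw [prSH_isJunta_eq_one hAM (by omega), mul_one]
    · simp [pSet, hAM]
  calc 1 - (ρA * lam + (1 - ρA)) ^ Mᶜ.card / lam ^ (k - M.card)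
      ≤ ∑ A with A.card ≤ k - M.card, pSet Mᶜ ρA A :=
        one_sub_le_sum_pSet_card_le Mᶜ hρA0 hρA1 hlam _
    _ = ∑ A with A.card ≤ k - M.card, pSet Mᶜ ρA A * prSH n M A ρS (IsJunta n k) :=
        Finset.sum_congr rfl fun A hA => hsmall A (Finset.mem_filter.mp hA).2
    _ ≤ ∑ A, pSet Mᶜ ρA A * prSH n M A ρS (IsJunta n k) :=
        Finset.sum_le_sum_of_subset_of_nonneg (Finset.filter_subset _ _) fun A _ _ =>
          mul_nonneg (pSet_nonneg _ hρA0 hρA1 A) (prSH_nonneg M A hρS0 hρS1 _)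

lemma le_prD_of_forall {t : ℕ} (ht : t ≤ n) {ρA ρS c : ℝ} {E : ((Fin n → Bool) → Bool) → Prop}
    (h : ∀ M : Finset (Fin n), M.card = t → c ≤ ∑ A, pSet Mᶜ ρA A * prSH n M A ρS E) :
    c ≤ prD n t ρA ρS E := by
  unfold prD
  rw [le_div_iff₀ (by exact_mod_cast Nat.choose_pos ht), Finset.univ_filter_card_eq]
  have := Finset.card_nsmul_le_sum _ _ c fun M hM => h M (Finset.mem_powersetCard_univ.mp hM)
  rwa [Finset.card_powersetCard, Finset.card_univ, Fintype.card_fin, nsmul_eq_mul,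
    mul_comm] at this

lemma one_sub_le_prD_isJunta {t k : ℕ} (htn : t ≤ n) (htk : t ≤ k) {ρA ρS lam : ℝ}
    (hρA0 : 0 ≤ ρA) (hρA1 : ρA ≤ 1) (hρS0 : 0 ≤ ρS) (hρS1 : ρS ≤ 1) (hlam : 1 ≤ lam) :
    1 - (ρA * lam + (1 - ρA)) ^ (n - t) / lam ^ (k - t) ≤ prD n t ρA ρS (IsJunta n k) :=
  le_prD_of_forall htn fun M hM => by
    have hMc : Mᶜ.card = n - t := by rw [Finset.card_compl, Fintype.card_fin, hM]
    simpa only [hMc, hM] using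
      one_sub_le_sum_pSet_mul_prSH_isJunta M (hM ▸ htk) hρA0 hρA1 hρS0 hρS1 hlam

end RandomFunction

section Estimates

lemma one_add_half_pow_div_le_exp {u : ℝ} (hu : 0 ≤ u) (m s : ℕ) :
    (1 + u / 2) ^ m / (1 + u) ^ s ≤ exp (m * (u / 2) - s * (u - u ^ 2)) := by
  have hu1 : 0 < 1 + u := by linarith
  have hnum : (1 + u / 2) ^ m ≤ exp (m * (u / 2)) := by
    rw [exp_nat_mul]
    exact pow_le_pow_left₀ (by linarith) (by linarith [add_one_le_exp (u / 2)]) m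
  -- `u - u² ≤ u / (1 + u) = 1 - (1 + u)⁻¹ ≤ log (1 + u)`
  have hlog : u - u ^ 2 ≤ log (1 + u) := by
    refine le_trans ?_ (one_sub_inv_le_log_of_pos hu1)
    rw [show 1 - (1 + u)⁻¹ = u / (1 + u) by field_simp; ring, le_div_iff₀ hu1]
    nlinarith [pow_nonneg hu 3]
  have hden : exp (s * (u - u ^ 2)) ≤ (1 + u) ^ s := by
    rw [exp_nat_mul]
    exact pow_le_pow_left₀ (exp_pos _).le ((exp_le_exp.mpr hlog).trans (exp_log hu1).le) s
  rw [exp_sub]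
  exact div_le_div₀ (exp_pos _).le hnum (exp_pos _) hden

lemma chernoff_exponent_le {δ x L m s : ℝ} (hδ : 0 < δ) (hx : 0 < x) (hL0 : 0 ≤ L)
    (hLx : L ≤ √x) (hm : m ≤ 2 * δ * x + δ * √x * L + 1)
    (hs : δ * x + δ * √x * L - 1 ≤ s) :
    m * (L / (8 * √x) / 2) - s * (L / (8 * √x) - (L / (8 * √x)) ^ 2) ≤ 1 - δ / 32 * L ^ 2 := by
  obtain ⟨r, hr, rfl⟩ : ∃ r, 0 < r ∧ x = r ^ 2 := ⟨√x, sqrt_pos.mpr hx, (sq_sqrt hx.le).symm⟩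
  rw [sqrt_sq hr.le] at *
  set u := L / (8 * r) with hu
  have hL : L = 8 * r * u := by rw [hu]; field_simp
  have hu0 : 0 ≤ u := by positivity
  have hu8 : u ≤ 1 / 8 := by rw [hu, div_le_iff₀ (by positivity)]; linarith
  rw [hL] at hm hs ⊢
  have h1 := mul_le_mul_of_nonneg_right hm (by linarith : 0 ≤ u / 2)
  have h2 := mul_le_mul_of_nonneg_right hs (by nlinarith : 0 ≤ u - u ^ 2)
  nlinarith [mul_nonneg (mul_nonneg hδ.le (sq_nonneg (r * u))) (by linarith : 0 ≤ 1 - 8 * u)]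

lemma eventually_parameter_bounds {α γ : ℝ} (hα₁ : 1 / 2 < α) (hα₂ : α < 1) (hγ : 0 < γ) :
    ∀ᶠ x : ℝ in atTop, 1 ≤ (1 - α) * x ∧ logb 2 x ≤ √x ∧
      (1 - α) * √x * logb 2 x ≤ (2 * α - 1) * x ∧ exp (1 - (1 - α) / 32 * logb 2 x ^ 2) ≤ γ := by
  have hδ : 0 < 1 - α := by linarith
  have hlo : logb 2 =o[atTop] (fun x : ℝ => √x) := by
    refine ((isLittleO_log_rpow_atTop (by norm_num : (0 : ℝ) < 1 / 2)).const_mul_left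
      (log 2)⁻¹).congr (fun x => ?_) (fun x => (sqrt_eq_rpow x).symm)
    rw [logb, div_eq_inv_mul]
  have hexp : Tendsto (fun x => exp (1 - (1 - α) / 32 * logb 2 x ^ 2)) atTop (nhds 0) := by
    have hsq : Tendsto (fun x => (1 - α) / 32 * logb 2 x ^ 2) atTop atTop :=
      ((tendsto_pow_atTop two_ne_zero).comp (tendsto_logb_atTop one_lt_two)).const_mul_atTop
        (by positivity)
    simp_rw [sub_eq_add_neg]
    exact tendsto_exp_atBot.comp
      (tendsto_atBot_add_const_left _ 1 (tendsto_neg_atTop_atBot.comp hsq))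
  have hc : 0 < (2 * α - 1) / (1 - α) := div_pos (by linarith) hδ
  filter_upwards [(tendsto_id.const_mul_atTop hδ).eventually_ge_atTop 1, hlo.bound one_pos,
    hlo.bound hc, hexp.eventually (gt_mem_nhds hγ), eventually_ge_atTop 0]
    with x h1 hLr hLr' hγx hx
  simp only [norm_eq_abs, abs_of_nonneg (sqrt_nonneg x), one_mul] at hLr hLr'
  refine ⟨h1, (le_abs_self _).trans hLr, ?_, hγx.le⟩
  calc (1 - α) * √x * logb 2 x ≤ (1 - α) * √x * ((2 * α - 1) / (1 - α) * √x) := by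
        gcongr; exact (le_abs_self _).trans hLr'
    _ = (2 * α - 1) * x := by field_simp; rw [sq_sqrt hx]; ring

lemma ceil_floor_size_bounds {α a : ℝ} {n m k : ℕ} (ha : 0 ≤ a) (hδn : 1 ≤ (1 - α) * n)
    (han : 2 * (1 - α) * n + a ≤ n) (hm : m = ⌈2 * (1 - α) * n + a⌉₊) (hk : k = ⌊α * n⌋₊) :
    m ≤ n ∧ n - m ≤ k ∧ (m : ℝ) ≤ 2 * (1 - α) * n + a + 1 ∧
      (1 - α) * n + a - 1 ≤ ((k - (n - m) : ℕ) : ℝ) := by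
  have hαn : 0 ≤ α * n := by nlinarith
  have hm_lb : 2 * (1 - α) * n + a ≤ m := hm ▸ Nat.le_ceil _
  have hm_ub : (m : ℝ) < 2 * (1 - α) * n + a + 1 := hm ▸ Nat.ceil_lt_add_one (by nlinarith)
  have hk_lb : α * n - 1 < k := by have := hk ▸ Nat.lt_floor_add_one (α * n); linarith
  have hmn : m ≤ n := hm ▸ Nat.ceil_le.mpr han
  have htk : n - m ≤ k := by
    have : ((n - m : ℕ) : ℝ) ≤ k := by push_cast [hmn]; linarith
    exact_mod_cast this
  refine ⟨hmn, htk, hm_ub.le, ?_⟩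
  push_cast [hmn, htk]
  linarith

end Estimates

theorem stmt2 (α : ℝ) (hα₁ : 1 / 2 < α) (hα₂ : α < 1) (γ : ℝ) (hγ : 0 < γ) :
    ∃ n₀ : ℕ, ∀ (n : ℕ) (ε : ℝ), n₀ ≤ n →
      (2 : ℝ) ^ (-((2 * α - 1) * (n : ℝ) / 2)) ≤ ε → ε ≤ 1 / 6 →
      ∀ m t : ℕ,
        m = ⌈2 * (1 - α) * (n : ℝ) + (1 - α) * Real.sqrt n * Real.logb 2 n⌉₊ →
        t = n - m →
        1 - γ ≤ prD n t (1 / 2) (ε / Real.sqrt n) (IsJunta n ⌊α * (n : ℝ)⌋₊) := by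
  obtain ⟨n₀, hn₀⟩ := eventually_atTop.mp
    ((tendsto_natCast_atTop_atTop (R := ℝ)).eventually (eventually_parameter_bounds hα₁ hα₂ hγ))
  refine ⟨n₀, fun n ε hn hε₁ hε₂ m t hm ht => ?_⟩
  obtain ⟨hδn, hLr, hsmall, hγn⟩ := hn₀ n hn
  have hn1 : (1 : ℝ) ≤ n := by nlinarith
  have hr1 : 1 ≤ √(n : ℝ) := one_le_sqrt.mpr hn1
  have hL0 : 0 ≤ logb 2 (n : ℝ) := logb_nonneg one_lt_two hn1
  obtain ⟨hmn, htk, hm_ub, hs_lb⟩ := ceil_floor_size_bounds (by positivity) hδn (by linarith) hm rfl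
  have hε₀ : 0 < ε := (rpow_pos_of_pos two_pos _).trans_le hε₁
  set u := logb 2 (n : ℝ) / (8 * √(n : ℝ))
  have htail : (1 / 2 * (1 + u) + (1 - 1 / 2)) ^ (n - t) / (1 + u) ^ (⌊α * n⌋₊ - t) ≤ γ := by
    rw [ht, Nat.sub_sub_self hmn, show 1 / 2 * (1 + u) + (1 - 1 / 2) = 1 + u / 2 by ring]
    calc _ ≤ exp (m * (u / 2) - ((⌊α * n⌋₊ - (n - m) : ℕ) : ℝ) * (u - u ^ 2)) :=
          one_add_half_pow_div_le_exp (by positivity) _ _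
      _ ≤ exp (1 - (1 - α) / 32 * logb 2 (n : ℝ) ^ 2) :=
          exp_le_exp.mpr (chernoff_exponent_le (by linarith) (by linarith) hL0 hLr hm_ub
            (by linarith))
      _ ≤ γ := hγn
  calc 1 - γ ≤ 1 - (1 / 2 * (1 + u) + (1 - 1 / 2)) ^ (n - t) / (1 + u) ^ (⌊α * n⌋₊ - t) := by
        linarith
    _ ≤ _ := one_sub_le_prD_isJunta (ht ▸ n.sub_le m) (ht ▸ htk) (by norm_num) (by norm_num)
        (by positivity) ((div_le_one (by positivity)).mpr (by linarith))
        (le_add_of_nonneg_right (by positivity))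
end

section
/- Let α ∈ (1/2, 1) be a constant and let c_α = −1/log₂(1.5 − α). For every γ > 0 there is n₀ ∈ ℕ such that for all n ≥ n₀, all reals ε with 2^{−(2α−1)n/2} ≤ ε ≤ 1/6, and every set X of at most (n/ε)² strings in {0,1}^n, the following holds: if M is a uniformly random subset of [n] of size t, then the probability that there exist x, y ∈ X whose Hamming distance is at least τ = ⌈5·c_α·log₂(n/ε)⌉ but whose restrictions to M coincide (x|_M = y|_M) is at most γ. -/
/-! For a fixed pair `x, y` at Hamming distance at least `τ`, the `t`-sets `M` on which they agree
are `t`-subsets of the at most `n - τ` coordinates where they agree, so a uniform `M` does so with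
probability at most `C(n - τ, t) / C(n, t) ≤ (m / n) ^ τ`. Since `√n log n = o(n)`, for large `n`
we have `m ≤ (3/2 - α) n`, and the choice of `τ` makes `(3/2 - α) ^ τ ≤ (ε / n) ^ 5`. A union
bound over the at most `(n / ε) ^ 4` pairs leaves `ε / n ≤ 1 / (6 n)`, which is eventually `≤ γ`. -/

open Finset

section Agreement

variable {ι : Type*} [Fintype ι] [DecidableEq ι] {β : ι → Type*} [∀ i, DecidableEq (β i)]

theorem card_filter_agreeOn_eq (x y : ∀ i, β i) (t : ℕ) :
    #{M : Finset ι | #M = t ∧ ∀ i ∈ M, x i = y i} =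
      (Fintype.card ι - hammingDist x y).choose t := by
  have hagree : #{i | x i = y i} = Fintype.card ι - hammingDist x y := by
    have := card_filter_add_card_filter_not (s := univ) (fun i => x i = y i)
    rw [card_univ] at this
    simp only [hammingDist, Ne]
    omega
  rw [← hagree, ← card_powersetCard]
  congr 1
  ext M
  simp [mem_powersetCard, subset_iff, and_comm]

theorem card_filter_exists_agreeOn_le (X : Finset (∀ i, β i)) (t τ : ℕ) :
    #{M : Finset ι | #M = t ∧ ∃ x ∈ X, ∃ y ∈ X, τ ≤ hammingDist x y ∧ ∀ i ∈ M, x i = y i} ≤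
      #X * #X * (Fintype.card ι - τ).choose t := by
  set far := {p ∈ X ×ˢ X | τ ≤ hammingDist p.1 p.2}
  calc _ ≤ #(far.biUnion fun p => {M : Finset ι | #M = t ∧ ∀ i ∈ M, p.1 i = p.2 i}) := by
        refine card_le_card fun M hM => ?_
        obtain ⟨hMt, x, hx, y, hy, hxy, hM⟩ := (mem_filter.1 hM).2
        exact mem_biUnion.2 ⟨(x, y), by simp [far, hx, hy, hxy], mem_filter.2 ⟨mem_univ _, hMt, hM⟩⟩
    _ ≤ #far * (Fintype.card ι - τ).choose t := by
        refine card_biUnion_le_card_mul _ _ _ fun p hp => ?_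
        rw [card_filter_agreeOn_eq]
        exact Nat.choose_le_choose t (by have := (mem_filter.1 hp).2; omega)
    _ ≤ #X * #X * (Fintype.card ι - τ).choose t := by
        gcongr
        exact (card_filter_le _ _).trans (card_product X X).le

end Agreement

namespace Nat

theorem choose_mul_le_choose_succ_mul {s n : ℕ} (hs : s < n) (t : ℕ) :
    s.choose t * n ≤ (s + 1).choose t * (n - t) := by
  refine Nat.le_of_mul_le_mul_right ?_ s.succ_pos
  calc s.choose t * n * (s + 1) = (s + 1).choose t * ((s + 1 - t) * n) := by
        rw [← mul_assoc, ← Nat.choose_mul_succ_eq]; ring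
    _ ≤ (s + 1).choose t * ((n - t) * (s + 1)) := by
        refine Nat.mul_le_mul_left _ ?_
        rcases le_or_gt t (s + 1) with ht | ht
        · rw [Nat.sub_mul, Nat.sub_mul, mul_comm n]
          have : t * (s + 1) ≤ t * n := by gcongr; omega
          omega
        · simp [Nat.sub_eq_zero_of_le ht.le]
    _ = (s + 1).choose t * (n - t) * (s + 1) := by ring

theorem choose_sub_mul_pow_le (n t τ : ℕ) :
    (n - τ).choose t * n ^ τ ≤ n.choose t * (n - t) ^ τ := by
  induction τ with
  | zero => simp
  | succ τ ih =>
    have step : (n - (τ + 1)).choose t * n ≤ (n - τ).choose t * (n - t) := by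
      rcases lt_or_ge τ n with hτ | hτ
      · have := choose_mul_le_choose_succ_mul (s := n - (τ + 1)) (n := n) (by omega) t
        rwa [show n - (τ + 1) + 1 = n - τ by omega] at this
      · rw [show n - (τ + 1) = 0 by omega, show n - τ = 0 by omega]
        rcases t with _ | t <;> simp
    calc (n - (τ + 1)).choose t * n ^ (τ + 1) = (n - (τ + 1)).choose t * n * n ^ τ := by ring
      _ ≤ (n - τ).choose t * (n - t) * n ^ τ := by gcongr
      _ = (n - t) * ((n - τ).choose t * n ^ τ) := by ring
      _ ≤ (n - t) * (n.choose t * (n - t) ^ τ) := by gcongr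
      _ = n.choose t * (n - t) ^ (τ + 1) := by ring

end Nat

theorem choose_sub_div_choose_le_pow {n t : ℕ} (hn : 0 < n) (ht : t ≤ n) (τ : ℕ) :
    ((n - τ).choose t : ℝ) / n.choose t ≤ ((n - t : ℕ) / n : ℝ) ^ τ := by
  rw [div_pow, div_le_div_iff₀ (by exact_mod_cast Nat.choose_pos ht) (by positivity)]
  exact_mod_cast (mul_comm _ _ : (n - t) ^ τ * n.choose t = _) ▸ Nat.choose_sub_mul_pow_le n t τ

theorem Nat.cast_ceil_le_of_add_one_le {a b : ℝ} (ha : 0 ≤ a) (h : a + 1 ≤ b) : (⌈a⌉₊ : ℝ) ≤ b :=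
  (Nat.ceil_lt_add_one ha).le.trans h

theorem pow_le_of_log_div_log_le {β z : ℝ} (hβ₀ : 0 < β) (hβ₁ : β < 1) (hz : 0 < z) {τ : ℕ}
    (hτ : Real.log z / Real.log β ≤ τ) : β ^ τ ≤ z := by
  rw [← Real.log_le_log_iff (by positivity) hz, Real.log_pow]
  exact (div_le_iff_of_neg (Real.log_neg hβ₀ hβ₁)).1 hτ

open Asymptotics Filter in
theorem eventually_mul_sqrt_mul_logb_add_one_le (a : ℝ) {c : ℝ} (hc : 0 < c) :
    ∀ᶠ n : ℕ in atTop, a * Real.sqrt n * Real.logb 2 n + 1 ≤ c * n := by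
  have hsqrt_log : (fun x => Real.sqrt x * Real.log x) =o[atTop] id := by
    refine ((isBigO_refl Real.sqrt atTop).mul_isLittleO
      (isLittleO_log_rpow_atTop one_half_pos)).trans_eventuallyEq ?_
    filter_upwards [eventually_ge_atTop 0] with x hx
    rw [← Real.sqrt_eq_rpow, Real.mul_self_sqrt hx, id]
  have hlittle : (fun x => a * Real.sqrt x * Real.logb 2 x + 1) =o[atTop] id := by
    refine ((hsqrt_log.const_mul_left (a / Real.log 2)).congr_left fun x => ?_).add
      (isLittleO_const_id_atTop 1)
    rw [Real.logb]; ring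
  filter_upwards [tendsto_natCast_atTop_atTop.eventually
    ((hlittle.def hc).and (eventually_ge_atTop 0))] with n ⟨hn, hn₀⟩
  simpa [abs_of_nonneg hn₀] using (le_abs_self _).trans hn

theorem card_filter_exists_agreeOn_div_choose_le {n : ℕ} (hn : 0 < n) {t : ℕ} (ht : t ≤ n)
    {β : Type*} [DecidableEq β] (X : Finset (Fin n → β)) (τ : ℕ) :
    (#{M : Finset (Fin n) | #M = t ∧
        ∃ x ∈ X, ∃ y ∈ X, τ ≤ hammingDist x y ∧ ∀ i ∈ M, x i = y i} : ℝ) / n.choose t ≤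
      (#X : ℝ) ^ 2 * ((n - t : ℕ) / n : ℝ) ^ τ := by
  have hcount : #{M : Finset (Fin n) | #M = t ∧
      ∃ x ∈ X, ∃ y ∈ X, τ ≤ hammingDist x y ∧ ∀ i ∈ M, x i = y i} ≤ #X * #X * (n - τ).choose t := by
    -- `Fin n` decides the bounded `∀` by `Nat.decidableForallFin`, not the generic instance
    convert card_filter_exists_agreeOn_le X t τ using 3
    rw [Fintype.card_fin]
  calc _ ≤ ((#X * #X * (n - τ).choose t : ℕ) : ℝ) / n.choose t := by gcongr
    _ = (#X : ℝ) ^ 2 * (((n - τ).choose t : ℝ) / n.choose t) := by push_cast; ring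
    _ ≤ _ := by gcongr; exact choose_sub_div_choose_le_pow hn ht τ

theorem stmt8 (α : ℝ) (hα₁ : 1 / 2 < α) (hα₂ : α < 1) (γ : ℝ) (hγ : 0 < γ) :
    ∃ n₀ : ℕ, ∀ (n : ℕ) (ε : ℝ) (X : Finset (Fin n → Bool)),
      n₀ ≤ n →
      (2 : ℝ) ^ (-((2 * α - 1) * (n : ℝ) / 2)) ≤ ε → ε ≤ 1 / 6 →
      (X.card : ℝ) ≤ ((n : ℝ) / ε) ^ 2 →
      ∀ m t τ : ℕ,
        m = ⌈2 * (1 - α) * (n : ℝ) + (1 - α) * Real.sqrt n * Real.logb 2 n⌉₊ →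
        t = n - m →
        τ = ⌈5 * (-1 / Real.logb 2 (1.5 - α)) * Real.logb 2 ((n : ℝ) / ε)⌉₊ →
        ((Finset.univ.filter (fun M : Finset (Fin n) => M.card = t ∧
            ∃ x ∈ X, ∃ y ∈ X, τ ≤ hammingDist x y ∧ ∀ i ∈ M, x i = y i)).card : ℝ) /
          (n.choose t : ℝ) ≤ γ := by
  obtain ⟨n₀, hn₀⟩ := Filter.eventually_atTop.1 <|
    (eventually_mul_sqrt_mul_logb_add_one_le (1 - α) (by linarith : 0 < α - 1 / 2)).and <|
      (tendsto_one_div_atTop_nhds_zero_nat.eventually (gt_mem_nhds (by positivity : 0 < 6 * γ))).and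
        (Filter.eventually_gt_atTop 0)
  refine ⟨n₀, fun n ε X hn hε₀ hε₁ hX m t τ hm ht hτ => ?_⟩
  obtain ⟨hsqrt_log, hinv, hnpos⟩ := hn₀ n hn
  have hnR : (0 : ℝ) < n := by exact_mod_cast hnpos
  have hε : 0 < ε := (Real.rpow_pos_of_pos two_pos _).trans_le hε₀
  obtain ⟨hβ₀, hβ₁⟩ : (0 : ℝ) < 1.5 - α ∧ (1.5 : ℝ) - α < 1 := by norm_num; constructor <;> linarith
  have hm_le : (m : ℝ) ≤ (1.5 - α) * n := by
    have hα : 0 ≤ 1 - α := by linarith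
    have hlog : 0 ≤ Real.logb 2 n := Real.logb_nonneg one_lt_two (by exact_mod_cast hnpos)
    exact hm ▸ Nat.cast_ceil_le_of_add_one_le (by positivity) (by linarith)
  have hm_lt : m < n := by exact_mod_cast (by nlinarith : (m : ℝ) < n)
  have hpow : (1.5 - α) ^ τ ≤ (ε / n) ^ 5 := by
    refine pow_le_of_log_div_log_le hβ₀ hβ₁ (by positivity) (le_of_eq_of_le ?_ (hτ ▸ Nat.le_ceil _))
    rw [Real.log_pow, ← inv_div (n : ℝ), Real.log_inv, Real.logb, Real.logb]
    push_cast
    field_simp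
  calc _ ≤ (#X : ℝ) ^ 2 * ((n - t : ℕ) / n : ℝ) ^ τ :=
        card_filter_exists_agreeOn_div_choose_le hnpos (by omega) X τ
    _ ≤ (((n : ℝ) / ε) ^ 2) ^ 2 * (ε / n) ^ 5 := by
        rw [show n - t = m by omega]
        gcongr
        exact (pow_le_pow_left₀ (by positivity) ((div_le_iff₀ hnR).2 hm_le) τ).trans hpow
    _ = ε / n := by field_simp
    _ ≤ γ := by
        rw [div_le_iff₀ hnR]
        rw [div_lt_iff₀ hnR] at hinv
        linarith
end

section
/- There exist constants c > 0 and n₀ ∈ ℕ such that for all n ≥ n₀ and all reals ε with 2^{−n} ≤ ε ≤ 1/5, the following holds: every randomized non-adaptive q-query algorithm on n-variable Boolean functions that accepts the all-zero function with probability at least 5/6 and rejects every function that is ε-far from every (n−1)-junta with probability at least 5/6 must satisfy q ≥ c/ε. -/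
/-- A randomized non-adaptive `q`-query algorithm on `n`-variable Boolean functions:
a probability distribution over pairs `(X, h)` with `X` a tuple of `q` query strings
and `h` a map from the `q` answer bits to accept (`true`) / reject (`false`). -/
structure RandNonAdaptive (n q : ℕ) where
  w : ((Fin q → (Fin n → Bool)) × ((Fin q → Bool) → Bool)) → ℝ
  nonneg : ∀ p, 0 ≤ w p
  sum_eq_one : ∑ p, w p = 1

/-- Probability that the algorithm accepts `f`. -/
def acceptProb {n q : ℕ} (A : RandNonAdaptive n q) (f : (Fin n → Bool) → Bool) : ℝ :=
  ∑ p, if p.2 (fun i => f (p.1 i)) = true then A.w p else 0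

/-- Probability that the algorithm rejects `f`. -/
def rejectProb {n q : ℕ} (A : RandNonAdaptive n q) (f : (Fin n → Bool) → Bool) : ℝ :=
  ∑ p, if p.2 (fun i => f (p.1 i)) = false then A.w p else 0

/-- An `ε`-tester for `k`-juntas: accepts every `k`-junta with probability ≥ 5/6 and
rejects every function that is `ε`-far from every `k`-junta with probability ≥ 5/6. -/
def IsJuntaTester (n k q : ℕ) (ε : ℝ) (A : RandNonAdaptive n q) : Prop :=
  (∀ f, IsJunta n k f → 5 / 6 ≤ acceptProb A f) ∧
  (∀ f, FarFromJuntas n k ε f → 5 / 6 ≤ rejectProb A f)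

/-!
Let `E` be a set of about `ε 2ⁿ` vectors of even weight. No translate `z + E` contains an edge
of the cube, so its indicator is `ε`-far from every `(n-1)`-junta: such a junta ignores some
direction `i`, and on each `i`-edge meeting `z + E` it errs at one endpoint. Unless the tester
queries a point of `z + E`, it sees the same answers as on the zero function, so for every `z` it
hits `z + E` with probability at least `2/3`. A fixed point lies in only `#E` of the `2ⁿ`
translates, and averaging over `z` gives `(2/3) 2ⁿ ≤ q #E ≤ 2 q ε 2ⁿ`.
-/

open Finset Pointwise

namespace RandNonAdaptive

variable {n q : ℕ} (A : RandNonAdaptive n q)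

def hitProb (T : Finset (Fin n → Bool)) : ℝ :=
  ∑ p, if ∃ i, p.1 i ∈ T then A.w p else 0

theorem acceptProb_add_rejectProb_le (f g : (Fin n → Bool) → Bool) (T : Finset (Fin n → Bool))
    (hfg : ∀ x ∉ T, f x = g x) : acceptProb A f + rejectProb A g ≤ 1 + A.hitProb T := by
  have hpoint : ∀ p, ((if p.2 (fun i => f (p.1 i)) = true then A.w p else 0) +
      if p.2 (fun i => g (p.1 i)) = false then A.w p else 0) ≤
      A.w p + if ∃ i, p.1 i ∈ T then A.w p else 0 := by
    intro p
    by_cases hit : ∃ i, p.1 i ∈ T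
    · rw [if_pos hit]
      split_ifs <;> linarith [A.nonneg p]
    · have hanswers : (fun i => g (p.1 i)) = fun i => f (p.1 i) :=
        funext fun i => (hfg _ fun h => hit ⟨i, h⟩).symm
      rw [hanswers, if_neg hit]
      cases p.2 (fun i => f (p.1 i)) <;> simp
  calc acceptProb A f + rejectProb A g
      = ∑ p, ((if p.2 (fun i => f (p.1 i)) = true then A.w p else 0) +
          if p.2 (fun i => g (p.1 i)) = false then A.w p else 0) := sum_add_distrib.symm
    _ ≤ ∑ p, (A.w p + if ∃ i, p.1 i ∈ T then A.w p else 0) := sum_le_sum fun p _ => hpoint p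
    _ = 1 + A.hitProb T := by rw [sum_add_distrib, A.sum_eq_one]; rfl

theorem sum_hitProb_le {ι : Type*} [Fintype ι] (T : ι → Finset (Fin n → Bool)) (m : ℕ)
    (hT : ∀ x, #{z | x ∈ T z} ≤ m) : ∑ z, A.hitProb (T z) ≤ q * m := by
  classical
  have hcard : ∀ X : Fin q → Fin n → Bool, #{z | ∃ i, X i ∈ T z} ≤ q * m := fun X =>
    calc #{z | ∃ i, X i ∈ T z} = #(univ.biUnion fun i => {z | X i ∈ T z}) := by
          congr 1; ext; simp
      _ ≤ ∑ i, #{z | X i ∈ T z} := card_biUnion_le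
      _ ≤ ∑ _i : Fin q, m := sum_le_sum fun i _ => hT (X i)
      _ = q * m := by simp
  calc ∑ z, A.hitProb (T z) = ∑ p, (#{z | ∃ i, p.1 i ∈ T z} : ℝ) * A.w p := by
        simp only [hitProb]
        rw [sum_comm]
        refine sum_congr rfl fun p _ => ?_
        rw [← sum_filter, sum_const, nsmul_eq_mul]
    _ ≤ ∑ p, (q * m : ℝ) * A.w p :=
        sum_le_sum fun p _ => mul_le_mul_of_nonneg_right (by exact_mod_cast hcard p.1) (A.nonneg p)
    _ = q * m := by rw [← mul_sum, A.sum_eq_one, mul_one]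

end RandNonAdaptive

theorem card_filter_mem_vadd_finset {G : Type*} [AddCommGroup G] [Fintype G] [DecidableEq G]
    (E : Finset G) (x : G) : #{z : G | x ∈ z +ᵥ E} = #E := by
  have : ({z : G | x ∈ z +ᵥ E} : Finset G) = x +ᵥ -E := by
    ext z
    rw [mem_filter, ← neg_vadd_mem_iff, ← neg_vadd_mem_iff, mem_neg', vadd_eq_add, vadd_eq_add,
      neg_add_rev, neg_neg, and_iff_right (mem_univ z)]
  rw [this, card_vadd_finset, card_neg]

section Parity

variable {n : ℕ}

def parity (x : Fin n → Bool) : Bool := ∑ i, x i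

theorem parity_add (x y : Fin n → Bool) : parity (x + y) = parity x + parity y :=
  sum_add_distrib

theorem parity_single (i : Fin n) (b : Bool) : parity (Pi.single i b) = b :=
  Fintype.sum_pi_single' i b

theorem parity_add_single (x : Fin n → Bool) (i : Fin n) :
    parity (x + Pi.single i 1) = parity x + 1 := by
  rw [parity_add, parity_single]

theorem parity_eq_of_mem_vadd {E : Finset (Fin n → Bool)} (hE : ∀ e ∈ E, parity e = 0)
    {z t : Fin n → Bool} (ht : t ∈ z +ᵥ E) : parity t = parity z := by
  obtain ⟨e, he, rfl⟩ := mem_vadd_finset.mp ht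
  rw [vadd_eq_add, parity_add, hE e he, add_zero]

theorem add_single_notMem_of_parity_eq {T : Finset (Fin n → Bool)} {b : Bool}
    (hT : ∀ t ∈ T, parity t = b) (i : Fin n) {t : Fin n → Bool} (ht : t ∈ T) :
    t + Pi.single i 1 ∉ T := fun h => by
  have := hT _ h
  rw [parity_add_single, hT t ht] at this
  cases b <;> simp at this

theorem two_mul_card_filter_parity_eq_zero (hn : 0 < n) :
    2 * #{x : Fin n → Bool | parity x = 0} = 2 ^ n := by
  set e : Fin n → Bool := Pi.single ⟨0, hn⟩ 1
  have hinv : ∀ x : Fin n → Bool, x + e + e = x := fun x => by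
    ext i
    simp [add_assoc, BooleanRing.add_self]
  have hflip : ∀ x : Fin n → Bool, parity (x + e) = 0 ↔ ¬parity x = 0 := fun x => by
    rw [parity_add_single]
    cases parity x <;> decide
  have heven_odd : #{x : Fin n → Bool | parity x = 0} = #{x : Fin n → Bool | ¬parity x = 0} :=
    card_nbij' (· + e) (· + e) (fun x => by simp [hflip]) (fun x => by simp [hflip])
      (fun x _ => hinv x) (fun x _ => hinv x)
  have := card_filter_add_card_filter_not (s := (univ : Finset (Fin n → Bool))) (parity · = 0)
  rw [card_univ, Fintype.card_fun, Fintype.card_bool, Fintype.card_fin] at this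
  omega

end Parity

section Juntas

variable {n : ℕ}

theorem IsJunta.exists_add_single_invariant {k : ℕ} {g : (Fin n → Bool) → Bool}
    (hg : IsJunta n k g) (hk : k < n) : ∃ i : Fin n, ∀ x, g (x + Pi.single i 1) = g x := by
  obtain ⟨S, hS, hgS⟩ := hg
  obtain ⟨i, -, hi⟩ := exists_mem_notMem_of_card_lt_card (s := S) (t := univ)
    (by simpa using hS.trans_lt hk)
  exact ⟨i, fun x => hgS _ _ fun j hj => by
    simp [Pi.single_eq_of_ne (ne_of_mem_of_not_mem hj hi)]⟩

theorem card_le_card_filter_decide_mem_ne {T : Finset (Fin n → Bool)}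
    {g : (Fin n → Bool) → Bool} (i : Fin n) (hT : ∀ t ∈ T, t + Pi.single i 1 ∉ T)
    (hg : ∀ x, g (x + Pi.single i 1) = g x) : #T ≤ #{x | decide (x ∈ T) ≠ g x} := by
  set D : Finset (Fin n → Bool) := {x | decide (x ∈ T) ≠ g x}
  -- flipping coordinate `i` moves a point of `T` where `g` is right to one where it errs
  have hflip : #(T \ D) ≤ #(D \ T) :=
    card_le_card_of_injOn (· + Pi.single i 1) (fun t ht => by
      obtain ⟨htT, htD⟩ := mem_sdiff.mp ht
      have hgt : g t = true := by simpa [D, htT] using htD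
      simp [D, hT t htT, hg, hgt]) (add_left_injective _).injOn
  have := card_sdiff_add_card_inter T D
  have := card_sdiff_add_card_inter D T
  rw [inter_comm] at this
  omega

theorem farFromJuntas_decide_mem (hn : 0 < n) {ε : ℝ} {T : Finset (Fin n → Bool)}
    (hT : ∀ i, ∀ t ∈ T, t + Pi.single i 1 ∉ T) (hε : ε * 2 ^ n ≤ #T) :
    FarFromJuntas n (n - 1) ε (· ∈ T) := fun g hg => by
  obtain ⟨i, hi⟩ := hg.exists_add_single_invariant (by omega)
  exact hε.trans (by exact_mod_cast card_le_card_filter_decide_mem_ne i (hT i) hi)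

end Juntas

theorem exists_finset_parity_eq_zero {n : ℕ} (hn : 0 < n) {a : ℝ} (ha : 1 ≤ a)
    (han : 2 * a ≤ 2 ^ n) :
    ∃ E : Finset (Fin n → Bool), (∀ e ∈ E, parity e = 0) ∧ a ≤ #E ∧ #E ≤ 2 * a := by
  have hcard : a ≤ #{x : Fin n → Bool | parity x = 0} := by
    have h := two_mul_card_filter_parity_eq_zero hn
    have : (2 : ℝ) * #{x : Fin n → Bool | parity x = 0} = 2 ^ n := by exact_mod_cast h
    linarith
  obtain ⟨E, hEsub, hEcard⟩ := exists_subset_card_eq (Nat.ceil_le.mpr hcard)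
  refine ⟨E, fun e he => (mem_filter.mp (hEsub he)).2, ?_, ?_⟩ <;> rw [hEcard]
  · exact Nat.le_ceil a
  · linarith [Nat.ceil_lt_add_one (zero_le_one.trans ha)]

theorem stmt15 :
    ∃ (c : ℝ) (n₀ : ℕ), 0 < c ∧
      ∀ (n q : ℕ) (ε : ℝ) (A : RandNonAdaptive n q),
        n₀ ≤ n → (2 : ℝ) ^ (-(n : ℝ)) ≤ ε → ε ≤ 1 / 5 →
        5 / 6 ≤ acceptProb A (fun _ => false) →
        (∀ f, FarFromJuntas n (n - 1) ε f → 5 / 6 ≤ rejectProb A f) →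
        c / ε ≤ (q : ℝ) := by
  refine ⟨1 / 3, 1, by norm_num, fun n q ε A hn hε hε' hacc hrej => ?_⟩
  have hε0 : 0 < ε := (Real.rpow_pos_of_pos two_pos _).trans_le hε
  have hεn : 1 ≤ ε * 2 ^ n := by
    rwa [Real.rpow_neg zero_le_two, Real.rpow_natCast, inv_le_iff_one_le_mul₀ (by positivity)]
      at hε
  obtain ⟨E, hE, hElo, hEhi⟩ := exists_finset_parity_eq_zero hn hεn (by nlinarith)
  have hhit : ∀ z : Fin n → Bool, (2 / 3 : ℝ) ≤ A.hitProb (z +ᵥ E) := fun z => by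
    have hfar := hrej (· ∈ z +ᵥ E) (farFromJuntas_decide_mem hn
      (fun i t ht => add_single_notMem_of_parity_eq (fun _ => parity_eq_of_mem_vadd hE) i ht)
      (by rwa [card_vadd_finset]))
    have := A.acceptProb_add_rejectProb_le (fun _ => false) (· ∈ z +ᵥ E) (z +ᵥ E) (by simp)
    linarith
  have hsum : (2 / 3 : ℝ) * 2 ^ n ≤ q * #E :=
    calc (2 / 3 : ℝ) * 2 ^ n = ∑ _z : Fin n → Bool, (2 / 3 : ℝ) := by simp [mul_comm]
      _ ≤ ∑ z, A.hitProb (z +ᵥ E) := sum_le_sum fun z _ => hhit z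
      _ ≤ q * #E := A.sum_hitProb_le (fun z => z +ᵥ E) #E
          fun x => (card_filter_mem_vadd_finset E x).le
  rw [div_le_iff₀ hε0]
  nlinarith
end

section
/- For every constant C > 0 and every γ > 0 there is n₀ ∈ ℕ such that for all n ≥ n₀ and all reals ε with 2^{−n} ≤ ε ≤ C·(log₂ n)/2^n such that 2^n·ε is an integer, the following holds: if g is a uniformly random element of the set of Boolean functions on {0,1}^n that take the value 1 on exactly 2^n·ε points, then Pr[g is ε-far from every (n−1)-junta] ≥ 1 − γ. -/
/-!
If the support of `g` contains no edge of the hypercube, then `g` is `ε`-far from every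
`(n-1)`-junta `h`: such an `h` ignores some coordinate `i`, hence is constant on every edge in
direction `i`, and sending each point of the support to itself or to its neighbour in direction `i`
injects the support into the set where `g ≠ h`. A uniformly random `E`-subset of the `M = 2ⁿ`
points contains a fixed pair with probability `E(E-1)/(M(M-1))`, so by a union bound over the
`n·2ⁿ` ordered edges it contains an edge with probability at most `2nE²/2ⁿ`, which is
`O(n³/2ⁿ) → 0` for `E ≤ C log₂ n`.
-/

open Finset

section TrueSet

variable {α : Type*} [Fintype α] [DecidableEq α]

abbrev trueSet (g : α → Bool) : Finset α := univ.filter fun x => g x = true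

abbrev trueSetEquiv : (α → Bool) ≃ Finset α where
  toFun := trueSet
  invFun s x := decide (x ∈ s)
  left_inv g := by funext x; simp [trueSet]
  right_inv s := by ext; simp [trueSet]

lemma card_filter_trueSet (P : Finset α → Prop) [DecidablePred P] :
    #(univ.filter fun g : α → Bool => P (trueSet g)) = #(univ.filter P) :=
  card_equiv trueSetEquiv (by simp [trueSetEquiv])

lemma card_filter_card_trueSet_eq (k : ℕ) :
    #(univ.filter fun g : α → Bool => #(trueSet g) = k) = (Fintype.card α).choose k := by
  rw [card_filter_trueSet (#· = k), ← card_univ, ← card_powersetCard]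
  congr 1
  ext s
  simp

lemma card_filter_card_eq_and_pair_subset {a b : α} (hab : a ≠ b) (k : ℕ) :
    #(univ.filter fun s : Finset α => #s = k + 2 ∧ {a, b} ⊆ s) =
      (Fintype.card α - 2).choose k := by
  have h := card_filter_powersetCard_subset {a, b} univ (k + 2) (subset_univ _)
    (by rw [card_pair hab]; omega)
  rw [card_pair hab, card_univ, Nat.add_sub_cancel] at h
  rw [← h]
  congr 1
  ext s
  simp

lemma card_filter_exists_pair_subset_le {ι : Type*} [Fintype ι] {a b : ι → α}
    (hab : ∀ i, a i ≠ b i) (k : ℕ) :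
    #(univ.filter fun s : Finset α => #s = k + 2 ∧ ∃ i, {a i, b i} ⊆ s) ≤
      Fintype.card ι * (Fintype.card α - 2).choose k := by
  calc _ ≤ #(univ.biUnion fun i =>
          univ.filter fun s : Finset α => #s = k + 2 ∧ {a i, b i} ⊆ s) := by
        refine card_le_card fun s hs => ?_
        obtain ⟨hs, i, hi⟩ := (mem_filter.1 hs).2
        exact mem_biUnion.2 ⟨i, mem_univ _, mem_filter.2 ⟨mem_univ _, hs, hi⟩⟩
    _ ≤ _ := card_biUnion_le_card_mul _ _ _ fun i _ =>
        (card_filter_card_eq_and_pair_subset (hab i) k).le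

lemma add_two_mul_add_one_mul_choose (m k : ℕ) :
    (m + 2) * (m + 1) * m.choose k = (m + 2).choose (k + 2) * ((k + 2) * (k + 1)) := by
  rw [mul_assoc, Nat.add_one_mul_choose_eq, ← mul_assoc, Nat.add_one_mul_choose_eq]
  ring

end TrueSet

section Cube

variable {n : ℕ}

def flipAt (i : Fin n) (x : Fin n → Bool) : Fin n → Bool := Function.update x i (!x i)

lemma flipAt_ne_self (i : Fin n) (x : Fin n → Bool) : flipAt i x ≠ x := fun h => by
  simpa [flipAt] using congrFun h i

lemma flipAt_involutive (i : Fin n) : Function.Involutive (flipAt i) := fun x => by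
  simp [flipAt]

lemma flipAt_apply_of_ne {i j : Fin n} (h : j ≠ i) (x : Fin n → Bool) : flipAt i x j = x j :=
  Function.update_of_ne h _ _

def ContainsCubeEdge (s : Finset (Fin n → Bool)) : Prop :=
  ∃ p : (Fin n → Bool) × Fin n, {p.1, flipAt p.2 p.1} ⊆ s

instance : DecidablePred (ContainsCubeEdge (n := n)) := fun _ => by
  unfold ContainsCubeEdge; infer_instance

lemma ContainsCubeEdge.two_le_card {s : Finset (Fin n → Bool)} (hs : ContainsCubeEdge s) :
    2 ≤ #s := by
  obtain ⟨⟨x, i⟩, hxi⟩ := hs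
  simpa [card_pair (flipAt_ne_self i x).symm] using card_le_card hxi

lemma IsJunta.exists_flipAt_invariant {k : ℕ} {f : (Fin n → Bool) → Bool} (hf : IsJunta n k f)
    (hk : k < n) : ∃ i, ∀ x, f (flipAt i x) = f x := by
  obtain ⟨S, hS, hfS⟩ := hf
  obtain ⟨i, -, hi⟩ := exists_mem_notMem_of_card_lt_card (s := S) (t := univ)
    (by simpa using hS.trans_lt hk)
  exact ⟨i, fun x => hfS _ _ fun j hj => flipAt_apply_of_ne (ne_of_mem_of_not_mem hj hi) x⟩

lemma card_trueSet_le_card_filter_ne {g h : (Fin n → Bool) → Bool} {i : Fin n}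
    (hg : ¬ ContainsCubeEdge (trueSet g)) (hh : ∀ x, h (flipAt i x) = h x) :
    #(trueSet g) ≤ #(univ.filter fun x => g x ≠ h x) := by
  have hgflip : ∀ x, g x = true → g (flipAt i x) = false := fun x hx => by
    by_contra hfx
    exact hg ⟨(x, i), by simp [insert_subset_iff, trueSet, hx, hfx]⟩
  refine card_le_card_of_injOn (fun x => if h x then flipAt i x else x) ?_ ?_
  · intro x hx
    have hgx : g x = true := by simpa [trueSet] using hx
    cases hhx : h x <;> simp [hhx, hgx, hgflip x hgx, hh]
  · intro x hx y hy hxy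
    cases hhx : h x <;> cases hhy : h y <;>
      simp only [hhx, hhy, if_true, Bool.false_eq_true, if_false] at hxy
    · exact hxy
    · simp [hxy, hh, hhy] at hhx
    · simp [← hxy, hh, hhx] at hhy
    · exact (flipAt_involutive i).injective hxy

lemma farFromJuntas_of_not_containsCubeEdge (hn : 0 < n) {ε : ℝ} {g : (Fin n → Bool) → Bool}
    (hg : ¬ ContainsCubeEdge (trueSet g)) (hε : ε * 2 ^ n ≤ #(trueSet g)) :
    FarFromJuntas n (n - 1) ε g := fun h hh => by
  obtain ⟨i, hi⟩ := hh.exists_flipAt_invariant (by omega)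
  exact hε.trans (mod_cast card_trueSet_le_card_filter_ne hg hi)

end Cube

lemma card_containsCubeEdge_mul_two_pow_le {n : ℕ} (hn : 0 < n) (E : ℕ) :
    #(univ.filter fun g : (Fin n → Bool) → Bool =>
        #(trueSet g) = E ∧ ContainsCubeEdge (trueSet g)) * 2 ^ n ≤
      2 * n * E ^ 2 * #(univ.filter fun g : (Fin n → Bool) → Bool => #(trueSet g) = E) := by
  rw [card_filter_trueSet (fun s => #s = E ∧ ContainsCubeEdge s), card_filter_card_trueSet_eq]
  rcases Nat.lt_or_ge E 2 with hE | hE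
  · rw [filter_false_of_mem fun s _ hs => by have := hs.2.two_le_card; omega]
    simp
  obtain ⟨k, rfl⟩ := Nat.exists_eq_add_of_le' hE
  obtain ⟨m, hm⟩ := Nat.exists_eq_add_of_le' (Nat.le_self_pow hn.ne' 2)
  have hedges := card_filter_exists_pair_subset_le (ι := (Fin n → Bool) × Fin n)
    (a := Prod.fst) (b := fun p => flipAt p.2 p.1) (fun p => (flipAt_ne_self p.2 p.1).symm) k
  simp only [Fintype.card_prod, Fintype.card_fun, Fintype.card_bool, Fintype.card_fin, hm,
    Nat.add_sub_cancel] at hedges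
  rw [Fintype.card_fun, Fintype.card_bool, Fintype.card_fin, hm]
  calc _ ≤ (m + 2) * n * m.choose k * (m + 2) := Nat.mul_le_mul_right _ hedges
    _ ≤ 2 * n * ((m + 2) * (m + 1) * m.choose k) := by nlinarith
    _ ≤ _ := by
      rw [add_two_mul_add_one_mul_choose]
      nlinarith [Nat.zero_le (n * (m + 2).choose (k + 2))]

lemma card_containsCubeEdge_le_mul {n : ℕ} (hn : 0 < n) {E : ℕ} {γ : ℝ}
    (hE : 2 * n * (E : ℝ) ^ 2 ≤ γ * 2 ^ n) :
    (#(univ.filter fun g : (Fin n → Bool) → Bool =>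
        #(trueSet g) = E ∧ ContainsCubeEdge (trueSet g)) : ℝ) ≤
      γ * #(univ.filter fun g : (Fin n → Bool) → Bool => #(trueSet g) = E) := by
  have hcount := card_containsCubeEdge_mul_two_pow_le hn E
  refine le_of_mul_le_mul_right ((Nat.cast_le (α := ℝ)).2 hcount |>.trans_eq' ?_ |>.trans ?_)
    (by positivity : (0 : ℝ) < 2 ^ n)
  · push_cast; ring
  · push_cast
    rw [mul_right_comm γ]
    exact mul_le_mul_of_nonneg_right hE (Nat.cast_nonneg _)

open Classical in
lemma card_le_card_containsCubeEdge_add_card_farFromJuntas {n E : ℕ} (hn : 0 < n) {ε : ℝ}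
    (hE : (E : ℝ) = 2 ^ n * ε) :
    #(univ.filter fun g : (Fin n → Bool) → Bool => #(trueSet g) = E) ≤
      #(univ.filter fun g : (Fin n → Bool) → Bool =>
          #(trueSet g) = E ∧ ContainsCubeEdge (trueSet g)) +
        #(univ.filter fun g => #(trueSet g) = E ∧ FarFromJuntas n (n - 1) ε g) := by
  refine (card_le_card fun g hg => ?_).trans (card_union_le _ _)
  have hgE : #(trueSet g) = E := (mem_filter.1 hg).2
  by_cases hedge : ContainsCubeEdge (trueSet g)
  · exact mem_union_left _ (mem_filter.2 ⟨mem_univ _, hgE, hedge⟩)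
  · refine mem_union_right _ (mem_filter.2 ⟨mem_univ _, hgE, ?_⟩)
    exact farFromJuntas_of_not_containsCubeEdge hn hedge (by rw [hgE, hE, mul_comm])

lemma Real.logb_two_natCast_le (n : ℕ) : Real.logb 2 n ≤ n := by
  rcases n.eq_zero_or_pos with rfl | hn
  · simp
  rw [Real.logb_le_iff_le_rpow one_lt_two (by positivity), Real.rpow_natCast]
  exact_mod_cast n.lt_two_pow_self.le

lemma sq_le_of_le_mul_logb_two {n : ℕ} {x C : ℝ} (hx : 0 ≤ x)
    (hxC : x ≤ C * Real.logb 2 n) : x ^ 2 ≤ C ^ 2 * n ^ 2 := calc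
  x ^ 2 ≤ (C * Real.logb 2 n) ^ 2 := pow_le_pow_left₀ hx hxC 2
  _ = C ^ 2 * Real.logb 2 n ^ 2 := by ring
  _ ≤ C ^ 2 * n ^ 2 := by
    gcongr
    · exact div_nonneg (Real.log_natCast_nonneg n) (Real.log_nonneg one_le_two)
    · exact Real.logb_two_natCast_le n

open Filter Topology

open Classical in
theorem stmt17_general (C : ℝ) (γ : ℝ) (hγ : 0 < γ) :
    ∃ n₀ : ℕ, ∀ (n E : ℕ) (ε : ℝ),
      n₀ ≤ n → (2 : ℝ) ^ (-(n : ℝ)) ≤ ε → ε ≤ C * Real.logb 2 n / 2 ^ n →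
      (E : ℝ) = 2 ^ n * ε →
      (1 - γ) * ((Finset.univ.filter (fun g : (Fin n → Bool) → Bool =>
          (Finset.univ.filter (fun x => g x = true)).card = E)).card : ℝ) ≤
        ((Finset.univ.filter (fun g : (Fin n → Bool) → Bool =>
          (Finset.univ.filter (fun x => g x = true)).card = E ∧
            FarFromJuntas n (n - 1) ε g)).card : ℝ) := by
  have hlim : Tendsto (fun n : ℕ => 2 * C ^ 2 * ((n : ℝ) ^ 3 / 2 ^ n)) atTop (𝓝 0) := by
    simpa using (tendsto_pow_const_div_const_pow_of_one_lt 3 one_lt_two).const_mul (2 * C ^ 2)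
  obtain ⟨n₀, hn₀⟩ :=
    eventually_atTop.1 ((eventually_gt_atTop 0).and (hlim.eventually (gt_mem_nhds hγ)))
  refine ⟨n₀, fun n E ε hn _ hεC hE => ?_⟩
  obtain ⟨hn, hsmall⟩ := hn₀ n hn
  rw [← mul_div_assoc, div_lt_iff₀ (by positivity)] at hsmall
  have hEsq : (E : ℝ) ^ 2 ≤ C ^ 2 * n ^ 2 :=
    sq_le_of_le_mul_logb_two E.cast_nonneg (by rwa [hE, ← le_div_iff₀' (by positivity)])
  have hedge := card_containsCubeEdge_le_mul hn (E := E) (γ := γ)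
    (by nlinarith [n.cast_nonneg (α := ℝ)])
  have hsplit := card_le_card_containsCubeEdge_add_card_farFromJuntas hn hE
  have := (Nat.cast_le (α := ℝ)).2 hsplit
  push_cast at this
  linarith

open Classical in
theorem stmt17 (C : ℝ) (hC : 0 < C) (γ : ℝ) (hγ : 0 < γ) :
    ∃ n₀ : ℕ, ∀ (n E : ℕ) (ε : ℝ),
      n₀ ≤ n → (2 : ℝ) ^ (-(n : ℝ)) ≤ ε → ε ≤ C * Real.logb 2 n / 2 ^ n →
      (E : ℝ) = 2 ^ n * ε →
      (1 - γ) * ((Finset.univ.filter (fun g : (Fin n → Bool) → Bool =>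
          (Finset.univ.filter (fun x => g x = true)).card = E)).card : ℝ) ≤
        ((Finset.univ.filter (fun g : (Fin n → Bool) → Bool =>
          (Finset.univ.filter (fun x => g x = true)).card = E ∧
            FarFromJuntas n (n - 1) ε g)).card : ℝ) :=
  stmt17_general C γ hγ
end
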